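/- arXiv:2201.10206 — 2 statements merged into one kernel-verified Lean document; each statement's English description precedes it below -/
import Mathlib

section
/- Let $s\geq 1$, $\omega_0>1$, $\omega_1 = T_s(\omega_0)/T_s'(\omega_0)$, and $R_s(z) = T_s(\omega_0+\omega_1 z)/T_s(\omega_0)$ for real $z$. Then $|R_s(z)|\leq 1$ for all $z \in [-(1+\omega_0)/\omega_1,\, 0]$. -/
open Polynomial Polynomial.Chebyshev

lemma U_ge_one (x : ℝ) (hx : 1 ≤ x) : ∀ n : ℕ,
    1 ≤ (U ℝ (n : ℤ)).eval x ∧ (U ℝ (n : ℤ)).eval x ≤ (U ℝ ((n : ℤ) + 1)).eval x := by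
  intro n
  induction n with
  | zero => simp [U_zero, U_one]; linarith
  | succ n ih =>
    obtain ⟨h1, h2⟩ := ih
    have hr := U_add_two ℝ (n : ℤ)
    have hr' : (U ℝ ((n : ℤ) + 2)).eval x = 2 * x * (U ℝ ((n : ℤ) + 1)).eval x - (U ℝ (n : ℤ)).eval x := by
      rw [hr]; simp
    constructor
    · push_cast; linarith
    · push_cast at *
      rw [show ((n : ℤ) + 1 + 1) = (n : ℤ) + 2 by ring, hr']
      nlinarith

lemma T_ge_one (x : ℝ) (hx : 1 ≤ x) : ∀ n : ℕ,
    1 ≤ (T ℝ (n : ℤ)).eval x ∧ (T ℝ (n : ℤ)).eval x ≤ (T ℝ ((n : ℤ) + 1)).eval x := by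
  intro n
  induction n with
  | zero => simp [T_zero, T_one]; linarith
  | succ n ih =>
    obtain ⟨h1, h2⟩ := ih
    have hr : (T ℝ ((n : ℤ) + 2)).eval x = 2 * x * (T ℝ ((n : ℤ) + 1)).eval x - (T ℝ (n : ℤ)).eval x := by
      rw [T_add_two]; simp
    constructor
    · push_cast; linarith
    · push_cast at *
      rw [show ((n : ℤ) + 1 + 1) = (n : ℤ) + 2 by ring, hr]
      nlinarith

lemma T_abs_le_one (x : ℝ) (h1 : -1 ≤ x) (h2 : x ≤ 1) (n : ℤ) :
    |(T ℝ n).eval x| ≤ 1 := by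
  rw [← Real.cos_arccos h1 h2, T_real_cos]
  exact Real.abs_cos_le_one _

lemma T_strictMonoOn (s : ℕ) (hs : 1 ≤ s) :
    StrictMonoOn (fun x : ℝ => (T ℝ (s : ℤ)).eval x) (Set.Ici 1) := by
  apply strictMonoOn_of_deriv_pos (convex_Ici 1)
  · exact (Polynomial.continuous _).continuousOn
  · intro x hx
    rw [interior_Ici] at hx
    have hd : deriv (fun x : ℝ => (T ℝ (s : ℤ)).eval x) x = (derivative (T ℝ (s : ℤ))).eval x :=
      Polynomial.deriv _
    rw [hd, T_derivative_eq_U]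
    have hcast : ((s : ℤ) - 1) = ((s - 1 : ℕ) : ℤ) := by omega
    have hU := (U_ge_one x (le_of_lt hx) (s - 1)).1
    rw [hcast]
    simp only [Polynomial.eval_mul, Polynomial.eval_intCast]
    push_cast
    have : (1 : ℝ) ≤ (s : ℝ) := by exact_mod_cast hs
    nlinarith

/-- Stability of the first-order Chebyshev polynomial on the negative real interval:
`|R_s(z)| ≤ 1` for `z ∈ [-(1+ω₀)/ω₁, 0]`. -/
theorem chebyshev_stability_interval (s : ℕ) (hs : 1 ≤ s) (ω0 ω1 : ℝ) (hω0 : 1 < ω0)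
    (hω1 : ω1 = (T ℝ (s : ℤ)).eval ω0 / (derivative (T ℝ (s : ℤ))).eval ω0) :
    ∀ z : ℝ, -(1 + ω0) / ω1 ≤ z → z ≤ 0 →
      |(T ℝ (s : ℤ)).eval (ω0 + ω1 * z) / (T ℝ (s : ℤ)).eval ω0| ≤ 1 := by
  intro z hz1 hz2
  have hω0' : (1 : ℝ) ≤ ω0 := le_of_lt hω0
  have hA : 1 ≤ (T ℝ (s : ℤ)).eval ω0 := (T_ge_one ω0 hω0' s).1
  have hApos : 0 < (T ℝ (s : ℤ)).eval ω0 := by linarith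
  have hB : 0 < (derivative (T ℝ (s : ℤ))).eval ω0 := by
    rw [T_derivative_eq_U]
    have hcast : ((s : ℤ) - 1) = ((s - 1 : ℕ) : ℤ) := by omega
    have hU := (U_ge_one ω0 hω0' (s - 1)).1
    rw [hcast]
    simp only [Polynomial.eval_mul, Polynomial.eval_intCast]
    push_cast
    have : (1 : ℝ) ≤ (s : ℝ) := by exact_mod_cast hs
    nlinarith
  have hω1pos : 0 < ω1 := by rw [hω1]; positivity
  set x := ω0 + ω1 * z with hx
  have hxle : x ≤ ω0 := by nlinarith
  have hxge : -1 ≤ x := by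
    rw [div_le_iff₀ hω1pos] at hz1
    nlinarith
  have key : |(T ℝ (s : ℤ)).eval x| ≤ (T ℝ (s : ℤ)).eval ω0 := by
    rcases le_or_gt x 1 with hc | hc
    · exact le_trans (T_abs_le_one x hxge hc _) hA
    · have hm : (T ℝ (s : ℤ)).eval x ≤ (T ℝ (s : ℤ)).eval ω0 := by
        rcases eq_or_lt_of_le hxle with h | h
        · rw [h]
        · exact le_of_lt (T_strictMonoOn s hs (Set.mem_Ici.2 (le_of_lt hc))
            (Set.mem_Ici.2 hω0') h)
      have hp : 1 ≤ (T ℝ (s : ℤ)).eval x := (T_ge_one x (le_of_lt hc) s).1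
      rw [abs_of_pos (by linarith)]
      exact hm
  rw [abs_div, div_le_one (by rwa [abs_of_pos hApos])]
  rwa [abs_of_pos hApos]
end

section
/- Let $s\geq 1$, $\omega_0>1$, $b_s = T_s''(\omega_0)/T_s'(\omega_0)^2$, $\omega_2 = T_s'(\omega_0)/T_s''(\omega_0)$, $a_s = 1 - b_s T_s(\omega_0)$. Define $R_2(p,q) = a_s + b_s T_s(\omega_0+\omega_2 p) + \big(\tfrac{\omega_2}{2} + (1-\tfrac{\omega_2}{2})\tfrac{U_{s-1}(\omega_0+\omega_2 p)}{U_{s-1}(\omega_0)}\big)(1+\tfrac{\omega_2}{2}p)(iq - \tfrac{q^2}{2})$, viewed as a polynomial in the real variables $p, q$ with complex coefficients. Then $R_2$ agrees with $1 + (p+iq) + \tfrac12(p+iq)^2$ up to total degree 2 in $(p,q)$: $R_2(0,0)=1$, $\partial_p R_2(0,0)=1$, $\partial_q R_2(0,0)=i$, $\partial_p^2 R_2(0,0)=1$, $\partial_p\partial_q R_2(0,0)=i$, and $\partial_q^2 R_2(0,0)=-1$. -/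
open Polynomial Polynomial.Chebyshev Complex

/-! Write `R₂ p q = a p + b p * (i q - q² / 2)` with real `a` and `b`. The six conditions then
reduce to `a 0 = a' 0 = a'' 0 = 1` and `b 0 = b' 0 = 1`. The choice of `aₛ`, `bₛ`, `ω₂` gives the
conditions on `a` directly, and `b' 0 = 1` amounts to `ω₂ U'ₛ₋₁(ω₀) = Uₛ₋₁(ω₀)`, which follows from
`T'ₛ U'ₛ₋₁ = T''ₛ Uₛ₋₁`, a consequence of `T'ₛ = s Uₛ₋₁`. -/

theorem Polynomial.Chebyshev.derivative_T_mul_derivative_U {R : Type*} [CommRing R] (n : ℤ) :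
    derivative (T R n) * derivative (U R (n - 1)) =
      derivative (derivative (T R n)) * U R (n - 1) := by
  simp only [T_derivative_eq_U, derivative_mul, derivative_intCast, zero_mul, zero_add]
  ring

theorem Polynomial.hasDerivAt_eval_const_add_mul {𝕜 : Type*} [NontriviallyNormedField 𝕜]
    (P : 𝕜[X]) (a b x : 𝕜) :
    HasDerivAt (fun x => P.eval (a + b * x)) (P.derivative.eval (a + b * x) * b) x :=
  (P.hasDerivAt _).comp x (by simpa using ((hasDerivAt_id x).const_mul b).const_add a)

theorem Complex.deriv_ofReal_comp (f : ℝ → ℝ) (x : ℝ) :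
    deriv (fun y => (f y : ℂ)) x = deriv f x := by
  by_cases hf : DifferentiableAt ℝ f x
  · exact hf.hasDerivAt.ofReal_comp.deriv
  · have hc : ¬ DifferentiableAt ℝ (fun y => (f y : ℂ)) x := fun h =>
      hf (by simpa [Function.comp_def] using reCLM.differentiableAt.comp x h)
    rw [deriv_zero_of_not_differentiableAt hf, deriv_zero_of_not_differentiableAt hc, ofReal_zero]

theorem hasDerivAt_I_mul_sub_sq_div_two (q : ℝ) :
    HasDerivAt (fun q : ℝ => I * q - (q : ℂ) ^ 2 / 2) (I - q) q := by
  have h : HasDerivAt (fun y : ℝ => (y : ℂ)) 1 q := by simpa using (hasDerivAt_id q).ofReal_comp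
  exact ((h.const_mul I).fun_sub ((h.fun_pow 2).div_const 2)).congr_deriv (by norm_num)

def AgreesWithExpToSecondOrder (F : ℝ → ℝ → ℂ) : Prop :=
  F 0 0 = 1 ∧
    deriv (fun p : ℝ => F p 0) 0 = 1 ∧
    deriv (fun q : ℝ => F 0 q) 0 = I ∧
    deriv (deriv (fun p : ℝ => F p 0)) 0 = 1 ∧
    deriv (fun p : ℝ => deriv (fun q : ℝ => F p q) 0) 0 = I ∧
    deriv (deriv (fun q : ℝ => F 0 q)) 0 = -1

theorem agreesWithExpToSecondOrder_of_eq_add_mul {F : ℝ → ℝ → ℂ} {a b : ℝ → ℝ}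
    (hF : ∀ p q, F p q = a p + b p * (I * q - (q : ℂ) ^ 2 / 2))
    (ha₀ : a 0 = 1) (ha₁ : deriv a 0 = 1) (ha₂ : deriv (deriv a) 0 = 1)
    (hb₀ : b 0 = 1) (hb₁ : deriv b 0 = 1) : AgreesWithExpToSecondOrder F := by
  have hp : deriv (fun p => F p 0) = fun p => ((deriv a p : ℝ) : ℂ) := by
    funext p
    simpa [hF] using deriv_ofReal_comp a p
  have hq : ∀ p, deriv (fun q => F p q) = fun q : ℝ => (b p : ℂ) * (I - q) := by
    intro p
    funext q
    simp only [hF]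
    exact (((hasDerivAt_I_mul_sub_sq_div_two q).const_mul _).const_add _).deriv
  refine ⟨by simp [hF, ha₀], by simp [hp, ha₁], by simp [hq, hb₀], ?_, ?_, ?_⟩
  · simp [hp, deriv_ofReal_comp, ha₂]
  · simp [hq, deriv_mul_const_field, deriv_ofReal_comp, hb₁]
  · simpa [hq, hb₀] using deriv_ofReal_comp id 0

theorem arkc_second_order_conditions_general (s : ℕ) (ω0 : ℝ)
    (hT' : (derivative (T ℝ (s : ℤ))).eval ω0 ≠ 0)
    (hT'' : (derivative (derivative (T ℝ (s : ℤ)))).eval ω0 ≠ 0)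
    (hU : (U ℝ ((s : ℤ) - 1)).eval ω0 ≠ 0)
    (bs ω2 as : ℝ)
    (hbs : bs = (derivative (derivative (T ℝ (s : ℤ)))).eval ω0 /
      ((derivative (T ℝ (s : ℤ))).eval ω0) ^ 2)
    (hω2 : ω2 = (derivative (T ℝ (s : ℤ))).eval ω0 /
      (derivative (derivative (T ℝ (s : ℤ)))).eval ω0)
    (has : as = 1 - bs * (T ℝ (s : ℤ)).eval ω0)
    (R : ℝ → ℝ → ℂ)
    (hR : ∀ p q, R p q = (as : ℂ) + (bs : ℂ) * ((T ℝ (s : ℤ)).eval (ω0 + ω2 * p) : ℝ) +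
      ((ω2 : ℂ) / 2 + (1 - (ω2 : ℂ) / 2) *
        (((U ℝ ((s : ℤ) - 1)).eval (ω0 + ω2 * p) / (U ℝ ((s : ℤ) - 1)).eval ω0 : ℝ) : ℂ)) *
      (1 + (ω2 : ℂ) / 2 * (p : ℂ)) * (Complex.I * (q : ℂ) - (q : ℂ) ^ 2 / 2)) :
    R 0 0 = 1 ∧
    deriv (fun p : ℝ => R p 0) 0 = 1 ∧
    deriv (fun q : ℝ => R 0 q) 0 = Complex.I ∧
    deriv (deriv (fun p : ℝ => R p 0)) 0 = 1 ∧
    deriv (fun p : ℝ => deriv (fun q : ℝ => R p q) 0) 0 = Complex.I ∧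
    deriv (deriv (fun q : ℝ => R 0 q)) 0 = -1 := by
  set Ts := T ℝ (s : ℤ)
  set Us := U ℝ ((s : ℤ) - 1)
  have hUω2 : (derivative Us).eval ω0 * ω2 / Us.eval ω0 = 1 := by
    have hTU := congrArg (eval ω0) (derivative_T_mul_derivative_U (R := ℝ) s)
    simp only [eval_mul] at hTU
    rw [hω2, div_eq_one_iff_eq hU]
    field_simp
    linarith
  have ha : deriv (fun p => as + bs * Ts.eval (ω0 + ω2 * p)) =
      fun p => bs * ((derivative Ts).eval (ω0 + ω2 * p) * ω2) := by
    funext p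
    exact (((hasDerivAt_eval_const_add_mul Ts ω0 ω2 p).const_mul bs).const_add as).deriv
  have ha' := ((hasDerivAt_eval_const_add_mul (derivative Ts) ω0 ω2 0).mul_const ω2).const_mul bs
  have hb := ((((hasDerivAt_eval_const_add_mul Us ω0 ω2 0).div_const (Us.eval ω0)).const_mul
    (1 - ω2 / 2)).const_add (ω2 / 2)).fun_mul
    (((hasDerivAt_id' (0 : ℝ)).const_mul (ω2 / 2)).const_add 1)
  refine agreesWithExpToSecondOrder_of_eq_add_mul
    (a := fun p => as + bs * Ts.eval (ω0 + ω2 * p))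
    (b := fun p => (ω2 / 2 + (1 - ω2 / 2) * (Us.eval (ω0 + ω2 * p) / Us.eval ω0)) *
      (1 + ω2 / 2 * p))
    (fun p q => by rw [hR]; push_cast; ring) ?_ ?_ ?_ ?_ ?_
  · simp [has]
  · simp only [ha, mul_zero, add_zero]
    rw [hbs, hω2]
    field_simp
  · simp only [ha, ha'.deriv, mul_zero, add_zero]
    rw [hbs, hω2]
    field_simp
  · simp [hU]
  · simp only [hb.deriv, mul_zero, add_zero, hUω2, div_self hU]
    ring

/-- Second order conditions for the ARKC stability polynomial: `R₂` agrees with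
`1 + (p+iq) + (p+iq)²/2` up to total degree 2 in `(p,q)`. -/
theorem arkc_second_order_conditions (s : ℕ) (hs : 1 ≤ s) (ω0 : ℝ) (hω0 : 1 < ω0)
    (hT' : (derivative (T ℝ (s : ℤ))).eval ω0 ≠ 0)
    (hT'' : (derivative (derivative (T ℝ (s : ℤ)))).eval ω0 ≠ 0)
    (hU : (U ℝ ((s : ℤ) - 1)).eval ω0 ≠ 0)
    (bs ω2 as : ℝ)
    (hbs : bs = (derivative (derivative (T ℝ (s : ℤ)))).eval ω0 /
      ((derivative (T ℝ (s : ℤ))).eval ω0) ^ 2)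
    (hω2 : ω2 = (derivative (T ℝ (s : ℤ))).eval ω0 /
      (derivative (derivative (T ℝ (s : ℤ)))).eval ω0)
    (has : as = 1 - bs * (T ℝ (s : ℤ)).eval ω0)
    (R : ℝ → ℝ → ℂ)
    (hR : ∀ p q, R p q = (as : ℂ) + (bs : ℂ) * ((T ℝ (s : ℤ)).eval (ω0 + ω2 * p) : ℝ) +
      ((ω2 : ℂ) / 2 + (1 - (ω2 : ℂ) / 2) *
        (((U ℝ ((s : ℤ) - 1)).eval (ω0 + ω2 * p) / (U ℝ ((s : ℤ) - 1)).eval ω0 : ℝ) : ℂ)) *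
      (1 + (ω2 : ℂ) / 2 * (p : ℂ)) * (Complex.I * (q : ℂ) - (q : ℂ) ^ 2 / 2)) :
    R 0 0 = 1 ∧
    deriv (fun p : ℝ => R p 0) 0 = 1 ∧
    deriv (fun q : ℝ => R 0 q) 0 = Complex.I ∧
    deriv (deriv (fun p : ℝ => R p 0)) 0 = 1 ∧
    deriv (fun p : ℝ => deriv (fun q : ℝ => R p q) 0) 0 = Complex.I ∧
    deriv (deriv (fun q : ℝ => R 0 q)) 0 = -1 :=
  arkc_second_order_conditions_general s ω0 hT' hT'' hU bs ω2 as hbs hω2 has R hR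
end
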